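/- arXiv:2507.11132 — 3 statements merged into one kernel-verified Lean document; each statement's English description precedes it below -/
import Mathlib

section
/- Let m : [0,α] → [0,∞) be continuous with m(0)=m(α)=0, m>0 on (0,α), m ∈ W^{1,∞}(0,α), and assume m is non-decreasing on (0,δ) and non-increasing on (α−δ,α) for some δ>0. Then there exist Lipschitz functions m↑, m↓ : [0,α] → [0,∞) with m↑ non-decreasing, m↓ non-increasing, m↑(0)=0, m↓(α)=0, and m(s)=m↑(s)·m↓(s) for all s ∈ [0,α]. -/
open Set

lemma glue_lip' {f : ℝ → ℝ} {K : NNReal} {x y z : ℝ}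
    (hxy : x ≤ y) (hyz : y ≤ z)
    (h1 : LipschitzOnWith K f (Icc x y)) (h2 : LipschitzOnWith K f (Icc y z)) :
    LipschitzOnWith K f (Icc x z) := by
  rw [lipschitzOnWith_iff_dist_le_mul] at h1 h2 ⊢
  have key : ∀ s ∈ Icc x z, ∀ t ∈ Icc x z, s ≤ t → dist (f s) (f t) ≤ K * dist s t := by
    intro s hs t ht hst
    rcases le_total t y with h | h
    · exact h1 s ⟨hs.1, hst.trans h⟩ t ⟨ht.1, h⟩
    · rcases le_total y s with h' | h'
      · exact h2 s ⟨h', hs.2⟩ t ⟨h, ht.2⟩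
      · have e : dist s y + dist y t = dist s t := by
          rw [Real.dist_eq, Real.dist_eq, Real.dist_eq,
            abs_of_nonpos (by linarith), abs_of_nonpos (by linarith),
            abs_of_nonpos (by linarith)]
          ring
        calc dist (f s) (f t) ≤ dist (f s) (f y) + dist (f y) (f t) := dist_triangle _ _ _
          _ ≤ K * dist s y + K * dist y t :=
            add_le_add (h1 s ⟨hs.1, h'⟩ y ⟨hxy, le_rfl⟩) (h2 y ⟨le_rfl, hyz⟩ t ⟨h, ht.2⟩)
          _ = K * dist s t := by rw [← e]; ring
  intro s hs t ht
  rcases le_total s t with hst | hst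
  · exact key s hs t ht hst
  · rw [dist_comm (f s), dist_comm s]
    exact key t ht s hs hst

lemma abs_exp_sub_exp_le' {x y C : ℝ} (hx : x ≤ C) (hy : y ≤ C) :
    |Real.exp x - Real.exp y| ≤ Real.exp C * |x - y| := by
  wlog hxy : y ≤ x generalizing x y
  · rw [abs_sub_comm, abs_sub_comm x y]; exact this hy hx (le_of_not_ge hxy)
  have h0 : Real.exp x - Real.exp y = Real.exp x * (1 - Real.exp (y - x)) := by
    rw [mul_sub, mul_one, ← Real.exp_add]
    have : x + (y - x) = y := by ring
    rw [this]
  have h2 : 1 - Real.exp (y - x) ≤ x - y := by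
    have := Real.add_one_le_exp (y - x); linarith
  have h3 : Real.exp x ≤ Real.exp C := Real.exp_le_exp.2 hx
  rw [abs_of_nonneg (sub_nonneg.2 (Real.exp_le_exp.2 hxy)),
      abs_of_nonneg (sub_nonneg.2 hxy), h0]
  nlinarith [Real.exp_pos x, sub_nonneg.2 hxy]

/-- Mobility decomposition: a Lipschitz mobility vanishing at the endpoints,
positive inside, monotone near the endpoints, factors as a non-decreasing
times a non-increasing Lipschitz function. -/
theorem mobility_decomposition
    (α : ℝ) (hα : 0 < α) (m : ℝ → ℝ) (L : NNReal)
    (hcont : ContinuousOn m (Icc 0 α))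
    (hm0 : m 0 = 0) (hmα : m α = 0)
    (hpos : ∀ s ∈ Ioo 0 α, 0 < m s)
    (hLip : LipschitzOnWith L m (Icc 0 α))
    (δ : ℝ) (hδ : 0 < δ)
    (hmono : MonotoneOn m (Ico 0 δ ∩ Icc 0 α))
    (hanti : AntitoneOn m (Ioc (α - δ) α ∩ Icc 0 α)) :
    ∃ (mu md : ℝ → ℝ) (Lu Ld : NNReal),
      LipschitzOnWith Lu mu (Icc 0 α) ∧
      LipschitzOnWith Ld md (Icc 0 α) ∧
      MonotoneOn mu (Icc 0 α) ∧
      AntitoneOn md (Icc 0 α) ∧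
      (∀ s ∈ Icc 0 α, 0 ≤ mu s) ∧
      (∀ s ∈ Icc 0 α, 0 ≤ md s) ∧
      mu 0 = 0 ∧ md α = 0 ∧
      (∀ s ∈ Icc 0 α, m s = mu s * md s) := by
  -- basic geometry
  set a : ℝ := min δ α / 4 with ha_def
  have hminpos : 0 < min δ α := lt_min hδ hα
  have ha0 : 0 < a := by positivity
  have haδ : a < δ := by
    have := min_le_left δ α; rw [ha_def]; linarith
  have haα4 : a ≤ α / 4 := by
    have := min_le_right δ α; rw [ha_def]; linarith
  have haα : a ≤ α := by linarith
  set b : ℝ := α - a with hb_def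
  have hab : a ≤ b := by rw [hb_def]; linarith
  have hbα : b ≤ α := by rw [hb_def]; linarith
  have hbδ : α - δ < b := by rw [hb_def]; linarith
  have hb0 : 0 < b := by rw [hb_def]; linarith
  have hma : 0 < m a := hpos a ⟨ha0, lt_of_le_of_lt haα4 (by linarith)⟩
  -- minimum of m on [a,b]
  obtain ⟨c, hc, hcmin'⟩ := (isCompact_Icc (a := a) (b := b)).exists_isMinOn
    ⟨a, le_rfl, hab⟩ (hcont.mono (Icc_subset_Icc ha0.le hbα))
  have hcmin : ∀ x ∈ Icc a b, m c ≤ m x := fun x hx => hcmin' hx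
  set ε : ℝ := m c with hε_def
  have hε : 0 < ε := hpos c ⟨lt_of_lt_of_le ha0 hc.1, lt_of_le_of_lt hc.2 (by rw [hb_def]; linarith)⟩
  set K : ℝ := (L : ℝ) / ε with hK_def
  have hK0 : 0 ≤ K := div_nonneg L.coe_nonneg hε.le
  -- nonnegativity of m
  have hm_nonneg : ∀ s ∈ Icc 0 α, 0 ≤ m s := by
    intro s hs
    rcases hs.1.eq_or_lt with h | h
    · simp [← h, hm0]
    rcases hs.2.eq_or_lt with h2 | h2
    · simp [h2, hmα]
    exact (hpos s ⟨h, h2⟩).le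
  -- bound on m
  have hM : ∀ s ∈ Icc 0 α, |m s| ≤ (L : ℝ) * α := by
    intro s hs
    have h := hLip.dist_le_mul s hs 0 (left_mem_Icc.2 hα.le)
    rw [Real.dist_eq, Real.dist_eq, hm0, sub_zero, sub_zero,
      abs_of_nonneg hs.1] at h
    calc |m s| ≤ (L : ℝ) * s := h
      _ ≤ (L : ℝ) * α := mul_le_mul_of_nonneg_left hs.2 L.coe_nonneg
  -- the decomposition
  set mu : ℝ → ℝ := fun s => m (min s a) * Real.exp (K * max (s - a) 0) with hmu_def
  set N : ℝ → ℝ := fun s => m (max s a) * Real.exp (-(K * max (s - a) 0)) with hN_def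
  set md : ℝ → ℝ := fun s => N s / m a with hmd_def
  have hmu_left : ∀ s, s ≤ a → mu s = m s := by
    intro s hs
    rw [hmu_def]
    simp [min_eq_left hs, max_eq_right (by linarith : s - a ≤ 0)]
  have hmu_right : ∀ s, a ≤ s → mu s = m a * Real.exp (K * (s - a)) := by
    intro s hs
    rw [hmu_def]
    simp [min_eq_right hs, max_eq_left (by linarith : (0:ℝ) ≤ s - a)]
  have hN_left : ∀ s, s ≤ a → N s = m a := by
    intro s hs
    rw [hN_def]
    simp [max_eq_right hs, max_eq_right (by linarith : s - a ≤ 0)]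
  have hN_right : ∀ s, a ≤ s → N s = m s * Real.exp (-(K * (s - a))) := by
    intro s hs
    rw [hN_def]
    simp [max_eq_left hs, max_eq_left (by linarith : (0:ℝ) ≤ s - a)]
  -- key growth bound on [a,b]
  have hkey : ∀ s t, a ≤ s → s ≤ t → t ≤ b → m t ≤ m s * Real.exp (K * (t - s)) := by
    intro s t hs hst htb
    have hsε : ε ≤ m s := hcmin s ⟨hs, hst.trans htb⟩
    have hd := hLip.dist_le_mul t ⟨by linarith, by linarith⟩ s ⟨by linarith, by linarith⟩
    rw [Real.dist_eq, Real.dist_eq, abs_of_nonneg (by linarith : (0:ℝ) ≤ t - s)] at hd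
    have h1 : m t ≤ m s + (L : ℝ) * (t - s) := by
      have := (abs_le.1 hd).2; linarith
    have hLK : (L : ℝ) ≤ m s * K := by
      have h := mul_le_mul_of_nonneg_right hsε (div_nonneg L.coe_nonneg hε.le)
      calc (L : ℝ) = ε * ((L : ℝ) / ε) := by field_simp
        _ ≤ m s * ((L : ℝ) / ε) := h
        _ = m s * K := by rw [hK_def]
    have h3 : 1 + K * (t - s) ≤ Real.exp (K * (t - s)) := by
      have := Real.add_one_le_exp (K * (t - s)); linarith
    have hms0 : (0:ℝ) ≤ m s := by linarith
    nlinarith [sub_nonneg.2 hst]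
  -- monotonicity of mu
  have hmu_mono : MonotoneOn mu (Icc 0 α) := by
    intro s hs t ht hst
    have mem : ∀ u : ℝ, 0 ≤ u → u ≤ α → min u a ∈ Ico 0 δ ∩ Icc 0 α := by
      intro u hu huα
      exact ⟨⟨le_min hu ha0.le, lt_of_le_of_lt (min_le_right _ _) haδ⟩,
        ⟨le_min hu ha0.le, (min_le_right u a).trans haα⟩⟩
    have h1 : m (min s a) ≤ m (min t a) :=
      hmono (mem s hs.1 hs.2) (mem t ht.1 ht.2) (min_le_min hst le_rfl)
    have h2 : Real.exp (K * max (s - a) 0) ≤ Real.exp (K * max (t - a) 0) := by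
      apply Real.exp_le_exp.2
      exact mul_le_mul_of_nonneg_left (max_le_max (by linarith) le_rfl) hK0
    have h3 : 0 ≤ m (min t a) :=
      hm_nonneg _ ⟨le_min ht.1 ha0.le, (min_le_right t a).trans haα⟩
    rw [hmu_def]
    exact mul_le_mul h1 h2 (Real.exp_pos _).le h3
  -- antitonicity of N
  have piece1 : ∀ u v, a ≤ u → u ≤ v → v ≤ b → N v ≤ N u := by
    intro u v hu huv hvb
    rw [hN_right u hu, hN_right v (hu.trans huv)]
    have hk := hkey u v hu huv hvb
    have hexp : Real.exp (K * (v - u)) * Real.exp (-(K * (v - a))) = Real.exp (-(K * (u - a))) := by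
      rw [← Real.exp_add]; congr 1; ring
    calc m v * Real.exp (-(K * (v - a)))
        ≤ (m u * Real.exp (K * (v - u))) * Real.exp (-(K * (v - a))) :=
          mul_le_mul_of_nonneg_right hk (Real.exp_pos _).le
      _ = m u * Real.exp (-(K * (u - a))) := by rw [mul_assoc, hexp]
  have piece2 : ∀ u v, b ≤ u → u ≤ v → v ≤ α → N v ≤ N u := by
    intro u v hu huv hvα
    have hau : a ≤ u := hab.trans hu
    rw [hN_right u hau, hN_right v (hau.trans huv)]
    have memu : u ∈ Ioc (α - δ) α ∩ Icc 0 α :=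
      ⟨⟨lt_of_lt_of_le hbδ hu, by linarith⟩, ⟨by linarith, by linarith⟩⟩
    have memv : v ∈ Ioc (α - δ) α ∩ Icc 0 α :=
      ⟨⟨lt_of_lt_of_le hbδ (hu.trans huv), hvα⟩, ⟨by linarith, hvα⟩⟩
    have h1 : m v ≤ m u := hanti memu memv huv
    have h2 : Real.exp (-(K * (v - a))) ≤ Real.exp (-(K * (u - a))) := by
      apply Real.exp_le_exp.2
      have : K * (u - a) ≤ K * (v - a) := mul_le_mul_of_nonneg_left (by linarith) hK0
      linarith
    exact mul_le_mul h1 h2 (Real.exp_pos _).le (hm_nonneg u ⟨by linarith, by linarith⟩)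
  have hcore : ∀ u v, a ≤ u → u ≤ v → v ≤ α → N v ≤ N u := by
    intro u v hu huv hvα
    rcases le_total v b with h | h
    · exact piece1 u v hu huv h
    rcases le_total u b with h' | h'
    · exact (piece2 b v le_rfl h hvα).trans (piece1 u b hu h' le_rfl)
    · exact piece2 u v h' huv hvα
  have hN_anti : AntitoneOn N (Icc 0 α) := by
    intro s hs t ht hst
    rcases le_total t a with h | h
    · rw [hN_left s (hst.trans h), hN_left t h]
    rcases le_total s a with h' | h'
    · rw [hN_left s h', ← hN_left a le_rfl]
      exact hcore a t le_rfl h ht.2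
    · exact hcore s t h' hst ht.2
  have hmd_anti : AntitoneOn md (Icc 0 α) := by
    intro s hs t ht hst
    rw [hmd_def]
    exact div_le_div_of_nonneg_right (hN_anti hs ht hst) hma.le
  -- nonnegativity and endpoints
  have hmu_nonneg : ∀ s ∈ Icc 0 α, 0 ≤ mu s := by
    intro s hs
    rw [hmu_def]
    exact mul_nonneg (hm_nonneg _ ⟨le_min hs.1 ha0.le, (min_le_right s a).trans haα⟩)
      (Real.exp_pos _).le
  have hmd_nonneg : ∀ s ∈ Icc 0 α, 0 ≤ md s := by
    intro s hs
    simp only [hmd_def, hN_def]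
    exact div_nonneg (mul_nonneg
      (hm_nonneg _ ⟨hs.1.trans (le_max_left s a), max_le hs.2 haα⟩)
      (Real.exp_pos _).le) hma.le
  have hmu0 : mu 0 = 0 := by rw [hmu_left 0 ha0.le, hm0]
  have hmdα : md α = 0 := by
    simp only [hmd_def]
    rw [hN_right α haα, hmα, zero_mul, zero_div]
  have hfac : ∀ s ∈ Icc 0 α, m s = mu s * md s := by
    intro s hs
    simp only [hmd_def]
    rcases le_total s a with h | h
    · rw [hmu_left s h, hN_left s h, div_self hma.ne', mul_one]
    · rw [hmu_right s h, hN_right s h]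
      have h1 := Real.exp_ne_zero (K * (s - a))
      rw [Real.exp_neg]
      field_simp
  -- Lipschitz constants
  set Lu : NNReal := ((L : ℝ) + m a * Real.exp (K * α) * K).toNNReal with hLu_def
  have hLuaux : (0:ℝ) ≤ m a * Real.exp (K * α) * K :=
    mul_nonneg (mul_nonneg hma.le (Real.exp_pos _).le) hK0
  have hLu_coe : (Lu : ℝ) = (L : ℝ) + m a * Real.exp (K * α) * K :=
    Real.coe_toNNReal _ (by linarith [L.coe_nonneg])
  have hmuL : LipschitzOnWith Lu mu (Icc 0 α) := by
    apply glue_lip' ha0.le haα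
    · rw [lipschitzOnWith_iff_dist_le_mul]
      intro s hs t ht
      rw [hmu_left s hs.2, hmu_left t ht.2]
      have h := hLip.dist_le_mul s ⟨hs.1, hs.2.trans haα⟩ t ⟨ht.1, ht.2.trans haα⟩
      refine h.trans ?_
      apply mul_le_mul_of_nonneg_right _ dist_nonneg
      rw [hLu_coe]; linarith
    · rw [lipschitzOnWith_iff_dist_le_mul]
      intro s hs t ht
      rw [hmu_right s hs.1, hmu_right t ht.1, Real.dist_eq, Real.dist_eq]
      have e1 : m a * Real.exp (K*(s-a)) - m a * Real.exp (K*(t-a))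
          = m a * (Real.exp (K*(s-a)) - Real.exp (K*(t-a))) := by ring
      rw [e1, abs_mul, abs_of_pos hma]
      have hC : ∀ u, u ∈ Icc a α → K * (u - a) ≤ K * α := fun u hu =>
        mul_le_mul_of_nonneg_left (by linarith [hu.1, hu.2, ha0.le]) hK0
      have h2 := abs_exp_sub_exp_le' (hC s hs) (hC t ht)
      have e3 : K * (s - a) - K * (t - a) = K * (s - t) := by ring
      rw [e3, abs_mul, abs_of_nonneg hK0] at h2
      calc m a * |Real.exp (K*(s-a)) - Real.exp (K*(t-a))|
          ≤ m a * (Real.exp (K*α) * (K * |s - t|)) := mul_le_mul_of_nonneg_left h2 hma.le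
        _ ≤ (Lu:ℝ) * |s - t| := by
            rw [hLu_coe]; nlinarith [abs_nonneg (s - t), L.coe_nonneg]
  set Ld : NNReal := (((L:ℝ) * α * K + (L:ℝ)) / m a).toNNReal with hLd_def
  have hLdaux : (0:ℝ) ≤ (L:ℝ) * α * K := mul_nonneg (mul_nonneg L.coe_nonneg hα.le) hK0
  have hLd_nn : (0:ℝ) ≤ ((L:ℝ) * α * K + (L:ℝ)) / m a :=
    div_nonneg (by linarith [L.coe_nonneg]) hma.le
  have hLd_coe : (Ld : ℝ) = ((L:ℝ) * α * K + (L:ℝ)) / m a := Real.coe_toNNReal _ hLd_nn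
  have hmdL : LipschitzOnWith Ld md (Icc 0 α) := by
    apply glue_lip' ha0.le haα
    · rw [lipschitzOnWith_iff_dist_le_mul]
      intro s hs t ht
      have h1 : md s = 1 := by simp only [hmd_def]; rw [hN_left s hs.2, div_self hma.ne']
      have h1t : md t = 1 := by simp only [hmd_def]; rw [hN_left t ht.2, div_self hma.ne']
      rw [h1, h1t, dist_self]
      positivity
    · rw [lipschitzOnWith_iff_dist_le_mul]
      intro s hs t ht
      have hrs : md s = m s * Real.exp (-(K * (s - a))) / m a := by
        simp only [hmd_def]; rw [hN_right s hs.1]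
      have hrt : md t = m t * Real.exp (-(K * (t - a))) / m a := by
        simp only [hmd_def]; rw [hN_right t ht.1]
      rw [hrs, hrt, Real.dist_eq, Real.dist_eq, div_sub_div_same, abs_div, abs_of_pos hma]
      have hdm : |m s - m t| ≤ (L:ℝ) * |s - t| := by
        have h := hLip.dist_le_mul s ⟨ha0.le.trans hs.1, hs.2⟩ t ⟨ha0.le.trans ht.1, ht.2⟩
        rwa [Real.dist_eq, Real.dist_eq] at h
      have hce : |Real.exp (-(K * (s - a))) - Real.exp (-(K * (t - a)))| ≤ K * |s - t| := by
        have hns : -(K * (s - a)) ≤ 0 := neg_nonpos.2 (mul_nonneg hK0 (by linarith [hs.1]))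
        have hnt : -(K * (t - a)) ≤ 0 := neg_nonpos.2 (mul_nonneg hK0 (by linarith [ht.1]))
        have h2 := abs_exp_sub_exp_le' (C := 0) hns hnt
        have e3 : -(K * (s - a)) - -(K * (t - a)) = K * (t - s) := by ring
        rw [Real.exp_zero, one_mul, e3, abs_mul, abs_of_nonneg hK0, abs_sub_comm t s] at h2
        exact h2
      have hms : |m s| ≤ (L:ℝ) * α := hM s ⟨ha0.le.trans hs.1, hs.2⟩
      have het : |Real.exp (-(K * (t - a)))| ≤ 1 := by
        rw [abs_of_pos (Real.exp_pos _)]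
        exact Real.exp_le_one_iff.2 (neg_nonpos.2 (mul_nonneg hK0 (by linarith [ht.1])))
      have split : m s * Real.exp (-(K * (s - a))) - m t * Real.exp (-(K * (t - a)))
          = m s * (Real.exp (-(K * (s - a))) - Real.exp (-(K * (t - a))))
            + Real.exp (-(K * (t - a))) * (m s - m t) := by ring
      have hnum : |m s * Real.exp (-(K * (s - a))) - m t * Real.exp (-(K * (t - a)))|
          ≤ ((L:ℝ) * α * K + (L:ℝ)) * |s - t| := by
        calc |m s * Real.exp (-(K * (s - a))) - m t * Real.exp (-(K * (t - a)))|
            ≤ |m s * (Real.exp (-(K * (s - a))) - Real.exp (-(K * (t - a))))|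
              + |Real.exp (-(K * (t - a))) * (m s - m t)| := by rw [split]; exact abs_add_le _ _
          _ = |m s| * |Real.exp (-(K * (s - a))) - Real.exp (-(K * (t - a)))|
              + |Real.exp (-(K * (t - a)))| * |m s - m t| := by rw [abs_mul, abs_mul]
          _ ≤ (L:ℝ) * α * (K * |s - t|) + 1 * ((L:ℝ) * |s - t|) := by
              apply add_le_add
              · exact mul_le_mul hms hce (abs_nonneg _)
                  (mul_nonneg L.coe_nonneg hα.le)
              · exact mul_le_mul het hdm (abs_nonneg _) one_pos.le
          _ = ((L:ℝ) * α * K + (L:ℝ)) * |s - t| := by ring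
      calc |m s * Real.exp (-(K * (s - a))) - m t * Real.exp (-(K * (t - a)))| / m a
          ≤ ((L:ℝ) * α * K + (L:ℝ)) * |s - t| / m a :=
            div_le_div_of_nonneg_right hnum hma.le
        _ = (Ld:ℝ) * |s - t| := by rw [hLd_coe]; ring
  exact ⟨mu, md, Lu, Ld, hmuL, hmdL, hmu_mono, hmd_anti, hmu_nonneg, hmd_nonneg,
    hmu0, hmdα, hfac⟩
end

section
/- Let m↑, m↓ : [0,α] → [0,∞) with m↑ non-decreasing and m↓ non-increasing, m_w(a,b) = m↑(a)·m↓(b), and m(s) = m_w(s,s). Define μ(x,y) = (H'(x)−H'(y))/(Λ'(x)−Λ'(y)) for x ≠ y and μ(x,x) = m(x), where H, Λ are C² convex on (0,α) with m·Λ'' = H'' and Λ'' > 0 on (0,α). Then for all x, y ∈ (0,α): m_w(min(x,y), max(x,y)) ≤ μ(x,y) ≤ m_w(max(x,y), min(x,y)). -/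
/-!
By Cauchy's mean value theorem applied to `H'` and `Λ'` on the segment between `x` and `y`,
`μ(x,y) = H''(ξ)/Λ''(ξ) = m↑(ξ) m↓(ξ)` for some `ξ` between `x` and `y`; monotonicity of `m↑`
and `m↓` then squeezes `m↑(ξ) m↓(ξ)` between the two upwind values.
-/

open Set

theorem exists_mem_Ioo_div_sub_eq_deriv_div {f g : ℝ → ℝ} {a b : ℝ} (hab : a < b)
    (hf : DifferentiableOn ℝ f (Icc a b)) (hg : DifferentiableOn ℝ g (Icc a b))
    (hg' : ∀ t ∈ Ioo a b, 0 < deriv g t) :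
    ∃ ξ ∈ Ioo a b, (f b - f a) / (g b - g a) = deriv f ξ / deriv g ξ := by
  obtain ⟨ξ, hξ, hcauchy⟩ := exists_ratio_deriv_eq_ratio_slope f hab hf.continuousOn
    (hf.mono Ioo_subset_Icc_self) g hg.continuousOn (hg.mono Ioo_subset_Icc_self)
  have hgab : g a < g b := strictMonoOn_of_deriv_pos (convex_Icc a b) hg.continuousOn
    (by rwa [interior_Icc]) (left_mem_Icc.2 hab.le) (right_mem_Icc.2 hab.le) hab
  refine ⟨ξ, hξ, ?_⟩
  rw [div_eq_div_iff (sub_pos.2 hgab).ne' (hg' ξ hξ).ne']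
  linarith

theorem exists_mem_uIcc_eq_of_deriv_deriv_eq_mul {s : Set ℝ} (hs : IsOpen s) [s.OrdConnected]
    {H Λ m : ℝ → ℝ} {μ : ℝ → ℝ → ℝ}
    (hH : ContDiffOn ℝ 2 H s) (hΛ : ContDiffOn ℝ 2 Λ s)
    (hΛ'' : ∀ t ∈ s, 0 < deriv (deriv Λ) t)
    (heq : ∀ t ∈ s, m t * deriv (deriv Λ) t = deriv (deriv H) t)
    (hμ : ∀ x y, x ≠ y → μ x y = (deriv H x - deriv H y) / (deriv Λ x - deriv Λ y))
    (hμdiag : ∀ x, μ x x = m x) {x y : ℝ} (hx : x ∈ s) (hy : y ∈ s) :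
    ∃ ξ ∈ uIcc x y, μ x y = m ξ := by
  have hH' : DifferentiableOn ℝ (deriv H) s :=
    (hH.deriv_of_isOpen hs (by norm_num)).differentiableOn one_ne_zero
  have hΛ' : DifferentiableOn ℝ (deriv Λ) s :=
    (hΛ.deriv_of_isOpen hs (by norm_num)).differentiableOn one_ne_zero
  have hsymm : ∀ a b, μ a b = μ b a := by
    intro a b
    rcases eq_or_ne a b with rfl | hab
    · rfl
    rw [hμ a b hab, hμ b a hab.symm, ← neg_sub (deriv H a), ← neg_sub (deriv Λ a),
      neg_div_neg_eq]
  have hlt : ∀ {a b}, a ∈ s → b ∈ s → a < b → ∃ ξ ∈ uIcc a b, μ a b = m ξ := by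
    intro a b ha hb hab
    have hsub : Icc a b ⊆ s := Set.OrdConnected.out' ha hb
    obtain ⟨ξ, hξ, hratio⟩ := exists_mem_Ioo_div_sub_eq_deriv_div hab (hH'.mono hsub)
      (hΛ'.mono hsub) fun t ht => hΛ'' t (hsub (Ioo_subset_Icc_self ht))
    have hξs : ξ ∈ s := hsub (Ioo_subset_Icc_self hξ)
    refine ⟨ξ, uIcc_of_le hab.le ▸ Ioo_subset_Icc_self hξ, ?_⟩
    rw [hsymm, hμ b a hab.ne', hratio, ← heq ξ hξs, mul_div_cancel_right₀ _ (hΛ'' ξ hξs).ne']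
  rcases lt_trichotomy x y with hxy | rfl | hyx
  · exact hlt hx hy hxy
  · exact ⟨x, left_mem_uIcc, hμdiag x⟩
  · rw [hsymm, uIcc_comm]
    exact hlt hy hx hyx

theorem MonotoneOn.mul_antitoneOn_mem_Icc {f g : ℝ → ℝ} {s : Set ℝ} [s.OrdConnected]
    (hf : MonotoneOn f s) (hg : AntitoneOn g s) (hf0 : ∀ t ∈ s, 0 ≤ f t)
    (hg0 : ∀ t ∈ s, 0 ≤ g t) {a b ξ : ℝ} (ha : a ∈ s) (hb : b ∈ s) (hξ : ξ ∈ Icc a b) :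
    f ξ * g ξ ∈ Icc (f a * g b) (f b * g a) := by
  have hξs : ξ ∈ s := Set.OrdConnected.out' ha hb hξ
  exact ⟨mul_le_mul (hf ha hξs hξ.1) (hg hξs hb hξ.2) (hg0 b hb) (hf0 ξ hξs),
    mul_le_mul (hf hξs hb hξ.2) (hg ha hξs hξ.1) (hg0 ξ hξs) (hf0 b hb)⟩

theorem entropic_average_between_upwind_general
    (α : ℝ) (mu md H Λ : ℝ → ℝ) (μ : ℝ → ℝ → ℝ)
    (hmu : MonotoneOn mu (Icc 0 α)) (hmd : AntitoneOn md (Icc 0 α))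
    (hmunn : ∀ s ∈ Icc 0 α, 0 ≤ mu s) (hmdnn : ∀ s ∈ Icc 0 α, 0 ≤ md s)
    (hH : ContDiffOn ℝ 2 H (Ioo 0 α)) (hΛ : ContDiffOn ℝ 2 Λ (Ioo 0 α))
    (hΛ'' : ∀ s ∈ Ioo 0 α, 0 < deriv (deriv Λ) s)
    (heq : ∀ s ∈ Ioo 0 α, mu s * md s * deriv (deriv Λ) s = deriv (deriv H) s)
    (hμ : ∀ x y : ℝ, x ≠ y → μ x y = (deriv H x - deriv H y) / (deriv Λ x - deriv Λ y))
    (hμdiag : ∀ x : ℝ, μ x x = mu x * md x) :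
    ∀ x ∈ Ioo 0 α, ∀ y ∈ Ioo 0 α,
      mu (min x y) * md (max x y) ≤ μ x y ∧ μ x y ≤ mu (max x y) * md (min x y) := by
  intro x hx y hy
  obtain ⟨ξ, hξ, hμξ⟩ := exists_mem_uIcc_eq_of_deriv_deriv_eq_mul (m := fun s => mu s * md s)
    isOpen_Ioo hH hΛ hΛ'' heq hμ hμdiag hx hy
  have hx' : x ∈ Icc 0 α := Ioo_subset_Icc_self hx
  have hy' : y ∈ Icc 0 α := Ioo_subset_Icc_self hy
  rw [hμξ]
  exact hmu.mul_antitoneOn_mem_Icc hmd hmunn hmdnn (min_rec' (· ∈ Icc 0 α) hx' hy')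
    (max_rec' (· ∈ Icc 0 α) hx' hy') hξ

/-- The generalised entropic average μ lies between the two upwind mobilities. -/
theorem entropic_average_between_upwind
    (α : ℝ) (hα : 0 < α) (mu md H Λ : ℝ → ℝ) (μ : ℝ → ℝ → ℝ)
    (hmu : MonotoneOn mu (Icc 0 α)) (hmd : AntitoneOn md (Icc 0 α))
    (hmunn : ∀ s ∈ Icc 0 α, 0 ≤ mu s) (hmdnn : ∀ s ∈ Icc 0 α, 0 ≤ md s)
    (hH : ContDiffOn ℝ 2 H (Ioo 0 α)) (hΛ : ContDiffOn ℝ 2 Λ (Ioo 0 α))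
    (hHconv : ConvexOn ℝ (Ioo 0 α) H) (hΛ'' : ∀ s ∈ Ioo 0 α, 0 < deriv (deriv Λ) s)
    (heq : ∀ s ∈ Ioo 0 α, mu s * md s * deriv (deriv Λ) s = deriv (deriv H) s)
    (hμ : ∀ x y : ℝ, x ≠ y → μ x y = (deriv H x - deriv H y) / (deriv Λ x - deriv Λ y))
    (hμdiag : ∀ x : ℝ, μ x x = mu x * md x) :
    ∀ x ∈ Ioo 0 α, ∀ y ∈ Ioo 0 α,
      mu (min x y) * md (max x y) ≤ μ x y ∧ μ x y ≤ mu (max x y) * md (min x y) :=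
  entropic_average_between_upwind_general α mu md H Λ μ hmu hmd hmunn hmdnn hH hΛ hΛ'' heq hμ hμdiag
end

section
/- Let I be a finite subset of ℤ^d, h ∈ (0,∞)^d, and |Q| = h₁⋯h_d. For P ∈ ℝ^I define ‖P‖ = inf over all F : ℤ^d × {1,…,d} → ℝ with finitely many nonzero entries satisfying P_i = Σ_{k=1}^d (F_{i,k} − F_{i−e_k,k})/h_k for all i ∈ I, of the quantity |Q|·Σ_{k=1}^d Σ_{i ∈ ℤ^d} |F_{i,k}|. Then ‖·‖ is a well-defined norm on ℝ^I; in particular the infimum is over a nonempty set, and ‖P‖ = 0 implies P = 0. -/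
open Set Function

/-!
A Dirac mass `δ_j` is, on `I`, the divergence of the flux that runs from `j` in a coordinate
direction `e_{k₀}` until it has left `I`; since the divergence is linear in the flux, every `P` is
the divergence of a finitely supported flux, so the admissible set is nonempty. Scaling and adding
admissible fluxes scale and (sub)add their masses, which gives homogeneity and the triangle
inequality for the infimum. Finally `|P_i| ≤ (∑ₖ 2 / hₖ) · ∑ |F|` for every admissible `F`, so
`‖P‖ = 0` forces `P_i = 0`.
-/

section Infimum

theorem sInf_apply_add_le {V : Type*} [Add V] {A : V → Set ℝ} (hne : ∀ P, (A P).Nonempty)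
    (hnonneg : ∀ P, ∀ w ∈ A P, 0 ≤ w)
    (hadd : ∀ P Q, ∀ w₁ ∈ A P, ∀ w₂ ∈ A Q, ∃ w ∈ A (P + Q), w ≤ w₁ + w₂) (P Q : V) :
    sInf (A (P + Q)) ≤ sInf (A P) + sInf (A Q) := by
  rw [← csInf_add (hne P) ⟨0, hnonneg P⟩ (hne Q) ⟨0, hnonneg Q⟩]
  refine le_csInf ((hne P).add (hne Q)) ?_
  rintro _ ⟨w₁, hw₁, w₂, hw₂, rfl⟩
  obtain ⟨w, hw, hle⟩ := hadd P Q w₁ hw₁ w₂ hw₂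
  exact (csInf_le ⟨0, hnonneg _⟩ hw).trans hle

theorem le_mul_sInf {s : Set ℝ} {x C : ℝ} (hne : s.Nonempty) (hC : 0 ≤ C)
    (hle : ∀ w ∈ s, x ≤ C * w) : x ≤ C * sInf s := by
  rw [← smul_eq_mul, ← Real.sInf_smul_of_nonneg hC]
  exact le_csInf hne.smul_set (by rintro _ ⟨w, hw, rfl⟩; exact hle w hw)

variable {V : Type*} [AddCommGroup V] [Module ℝ V] {A : V → Set ℝ}

theorem sInf_apply_smul_le {c : ℝ} {P : V} (hne : (A P).Nonempty) (hbdd : BddBelow (A (c • P)))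
    (hsmul : ∀ w ∈ A P, |c| * w ∈ A (c • P)) : sInf (A (c • P)) ≤ |c| * sInf (A P) :=
  le_mul_sInf hne (abs_nonneg c) fun w hw => csInf_le hbdd (hsmul w hw)

theorem sInf_apply_smul_eq (hne : ∀ P, (A P).Nonempty) (hnonneg : ∀ P, ∀ w ∈ A P, 0 ≤ w)
    (hsmul : ∀ (c : ℝ) P, ∀ w ∈ A P, |c| * w ∈ A (c • P)) (c : ℝ) (P : V) :
    sInf (A (c • P)) = |c| * sInf (A P) := by
  have hbdd : ∀ P, BddBelow (A P) := fun P => ⟨0, hnonneg P⟩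
  refine le_antisymm (sInf_apply_smul_le (hne P) (hbdd _) (hsmul c P)) ?_
  rcases eq_or_ne c 0 with rfl | hc
  · simpa using Real.sInf_nonneg (hnonneg _)
  calc |c| * sInf (A P) = |c| * sInf (A (c⁻¹ • c • P)) := by rw [inv_smul_smul₀ hc]
    _ ≤ |c| * (|c⁻¹| * sInf (A (c • P))) :=
        mul_le_mul_of_nonneg_left (sInf_apply_smul_le (hne _) (hbdd _) (hsmul _ _))
          (abs_nonneg c)
    _ = sInf (A (c • P)) := by
        rw [abs_inv, ← mul_assoc, mul_inv_cancel₀ (abs_ne_zero.2 hc), one_mul]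

end Infimum

section Flux

variable {ι κ : Type*} [Fintype κ]

noncomputable def fluxMass (F : ι → κ → ℝ) : ℝ := ∑ᶠ i, ∑ k, |F i k|

theorem fluxMass_nonneg (F : ι → κ → ℝ) : 0 ≤ fluxMass F :=
  finsum_nonneg fun _ => Finset.sum_nonneg fun _ _ => abs_nonneg _

theorem fluxMass_smul (c : ℝ) (F : ι → κ → ℝ) : fluxMass (c • F) = |c| * fluxMass F := by
  simp only [fluxMass, mul_finsum, Finset.mul_sum, Pi.smul_apply, smul_eq_mul, abs_mul]

theorem Function.HasFiniteSupport.sum_abs {F : ι → κ → ℝ} (hF : HasFiniteSupport F) :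
    HasFiniteSupport fun i => ∑ k, |F i k| :=
  hF.fun_comp (g := fun v => ∑ k, |v k|) (by simp)

theorem fluxMass_add_le {F G : ι → κ → ℝ} (hF : HasFiniteSupport F) (hG : HasFiniteSupport G) :
    fluxMass (F + G) ≤ fluxMass F + fluxMass G := by
  rw [fluxMass, fluxMass, fluxMass, ← finsum_add_distrib hF.sum_abs hG.sum_abs]
  refine finsum_le_finsum' (hF.add hG).sum_abs (hF.sum_abs.add hG.sum_abs) fun i => ?_
  simp only [Pi.add_apply, ← Finset.sum_add_distrib]
  exact Finset.sum_le_sum fun k _ => abs_add_le _ _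

theorem abs_le_fluxMass {F : ι → κ → ℝ} (hF : HasFiniteSupport F) (i : ι) (k : κ) :
    |F i k| ≤ fluxMass F :=
  calc |F i k| ≤ ∑ k, |F i k| :=
        Finset.single_le_sum (fun k _ => abs_nonneg (F i k)) (Finset.mem_univ k)
    _ ≤ fluxMass F :=
        single_le_finsum i hF.sum_abs fun _ => Finset.sum_nonneg fun _ _ => abs_nonneg _

variable [AddGroup ι]

noncomputable def fluxDiv (h : κ → ℝ) (e : κ → ι) : (ι → κ → ℝ) →ₗ[ℝ] ι → ℝ where
  toFun F i := ∑ k, (F i k - F (i - e k) k) / h k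
  map_add' F G := by
    ext i
    simp only [Pi.add_apply, ← Finset.sum_add_distrib, ← add_div]
    congr! 2
    ring
  map_smul' c F := by
    ext i
    simp only [Pi.smul_apply, smul_eq_mul, RingHom.id_apply, Finset.mul_sum, ← mul_sub,
      mul_div_assoc]

theorem abs_fluxDiv_le (h : κ → ℝ) (e : κ → ι) {F : ι → κ → ℝ} (hF : HasFiniteSupport F)
    (i : ι) : |fluxDiv h e F i| ≤ (∑ k, 2 / |h k|) * fluxMass F := by
  rw [Finset.sum_mul]
  refine (Finset.abs_sum_le_sum_abs _ _).trans (Finset.sum_le_sum fun k _ => ?_)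
  rw [abs_div, div_mul_eq_mul_div]
  gcongr
  calc |F i k - F (i - e k) k| ≤ |F i k| + |F (i - e k) k| := abs_sub _ _
    _ ≤ 2 * fluxMass F := by
        linarith [abs_le_fluxMass hF i k, abs_le_fluxMass hF (i - e k) k]

end Flux

section Lattice

variable {κ : Type*} [DecidableEq κ]

theorem mem_Icc_update_iff {α : Type*} [PartialOrder α] {i j : κ → α} {k₀ : κ} {T : α} :
    i ∈ Icc j (update j k₀ T) ↔ (∀ l ≠ k₀, i l = j l) ∧ j k₀ ≤ i k₀ ∧ i k₀ ≤ T := by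
  simp only [mem_Icc, Pi.le_def]
  constructor
  · rintro ⟨hj, hT⟩
    refine ⟨fun l hl => le_antisymm ?_ (hj l), hj k₀, by simpa using hT k₀⟩
    simpa [hl] using hT l
  · rintro ⟨hl, hj, hT⟩
    refine ⟨fun l => ?_, fun l => ?_⟩ <;> by_cases h : l = k₀
    all_goals simp_all

theorem sub_single_mem_Icc_update_iff {i j : κ → ℤ} {k₀ : κ} {T : ℤ} (hi : i k₀ ≤ T) :
    i - Pi.single k₀ 1 ∈ Icc j (update j k₀ T) ↔ i ∈ Icc j (update j k₀ T) ∧ i ≠ j := by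
  have hoff : ∀ l ≠ k₀, (i - Pi.single k₀ 1 : κ → ℤ) l = i l := fun l hl => by simp [hl]
  have hne : (∀ l ≠ k₀, i l = j l) → (i ≠ j ↔ i k₀ ≠ j k₀) := fun hl =>
    ⟨fun hij hk => hij (funext fun l => by by_cases h : l = k₀ <;> simp_all),
      fun hk hij => hk (congrFun hij k₀)⟩
  rw [mem_Icc_update_iff, mem_Icc_update_iff]
  simp only [Pi.sub_apply, Pi.single_eq_same]
  constructor
  · rintro ⟨hl, hj, -⟩
    have hl' : ∀ l ≠ k₀, i l = j l := fun l h => (hoff l h).symm.trans (hl l h)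
    exact ⟨⟨hl', by omega, hi⟩, (hne hl').2 (by omega)⟩
  · rintro ⟨⟨hl, hj, -⟩, hij⟩
    have := (hne hl).1 hij
    exact ⟨fun l h => (hoff l h).trans (hl l h), by omega, by omega⟩

variable [Fintype κ] {h : κ → ℝ} {e : κ → κ → ℤ} {k₀ : κ}

/- The flux is `h k₀` in direction `k₀` on the segment from `j` up to height `T`, where `T` bounds
the `k₀`-coordinates on `I`; its divergence is `δ_j` minus a Dirac mass at height `T + 1`. -/
theorem exists_fluxDiv_eq_ite (hk₀ : h k₀ ≠ 0) (he : e k₀ = Pi.single k₀ 1)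
    (I : Finset (κ → ℤ)) (j : κ → ℤ) :
    ∃ G : (κ → ℤ) → κ → ℝ, HasFiniteSupport G ∧
      ∀ i ∈ I, fluxDiv h e G i = if i = j then 1 else 0 := by
  classical
  obtain ⟨T, hT⟩ := ((insert j I).image (· k₀)).bddAbove
  refine ⟨(Icc j (update j k₀ T)).indicator fun _ => Pi.single k₀ (h k₀),
    (finite_Icc _ _).subset support_indicator_subset, fun i hi => ?_⟩
  have hiT : i k₀ ≤ T :=
    hT (Finset.mem_coe.2 (Finset.mem_image_of_mem _ (Finset.mem_insert_of_mem hi)))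
  have hj : j ∈ Icc j (update j k₀ T) :=
    mem_Icc_update_iff.2 ⟨fun _ _ => rfl, le_rfl, hT (by simp)⟩
  have hsub := sub_single_mem_Icc_update_iff (j := j) hiT
  simp only [fluxDiv, LinearMap.coe_mk, AddHom.coe_mk]
  rw [Finset.sum_eq_single k₀ (fun k _ hk => by simp [indicator_apply, ite_apply, hk]) (by simp),
    he]
  by_cases hij : i = j
  · subst hij
    simp [hj, hsub, hk₀]
  · simp [indicator_apply, ite_apply, hsub, hij]

theorem exists_fluxDiv_eq (hk₀ : h k₀ ≠ 0) (he : e k₀ = Pi.single k₀ 1) (I : Finset (κ → ℤ))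
    (P : (κ → ℤ) → ℝ) :
    ∃ F : (κ → ℤ) → κ → ℝ, HasFiniteSupport F ∧ ∀ i ∈ I, P i = fluxDiv h e F i := by
  choose G hG hdiv using exists_fluxDiv_eq_ite hk₀ he I
  refine ⟨∑ j ∈ I, P j • G j, ?_, fun i hi => ?_⟩
  · rw [Finset.sum_fn]
    fun_prop
  · simp [map_sum, map_smul, hdiv _ i hi, hi]

end Lattice

section AdmissibleCosts

variable {ι κ : Type*} [AddGroup ι] [Fintype κ] {I : Set ι} {h : κ → ℝ} {e : κ → ι}

noncomputable def admissibleCosts (I : Set ι) (h : κ → ℝ) (e : κ → ι) (P : ι → ℝ) : Set ℝ :=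
  {w | ∃ F : ι → κ → ℝ, HasFiniteSupport F ∧ (∀ i ∈ I, P i = fluxDiv h e F i) ∧
    w = (∏ k, h k) * fluxMass F}

theorem nonneg_of_mem_admissibleCosts (hh : ∀ k, 0 ≤ h k) {P : ι → ℝ} {w : ℝ}
    (hw : w ∈ admissibleCosts I h e P) : 0 ≤ w := by
  obtain ⟨F, -, -, rfl⟩ := hw
  exact mul_nonneg (Finset.prod_nonneg fun k _ => hh k) (fluxMass_nonneg F)

theorem abs_mul_mem_admissibleCosts_smul {P : ι → ℝ} {w : ℝ} (c : ℝ)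
    (hw : w ∈ admissibleCosts I h e P) : |c| * w ∈ admissibleCosts I h e (c • P) := by
  obtain ⟨F, hF, hdiv, rfl⟩ := hw
  refine ⟨c • F, by fun_prop, fun i hi => by simp [hdiv i hi], ?_⟩
  rw [fluxMass_smul]
  ring

theorem exists_le_add_of_mem_admissibleCosts (hh : ∀ k, 0 ≤ h k) {P Q : ι → ℝ} {w₁ w₂ : ℝ}
    (hw₁ : w₁ ∈ admissibleCosts I h e P) (hw₂ : w₂ ∈ admissibleCosts I h e Q) :
    ∃ w ∈ admissibleCosts I h e (P + Q), w ≤ w₁ + w₂ := by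
  obtain ⟨F, hF, hdivF, rfl⟩ := hw₁
  obtain ⟨G, hG, hdivG, rfl⟩ := hw₂
  refine ⟨_, ⟨F + G, hF.add hG, fun i hi => by simp [hdivF i hi, hdivG i hi], rfl⟩, ?_⟩
  rw [← mul_add]
  exact mul_le_mul_of_nonneg_left (fluxMass_add_le hF hG) (Finset.prod_nonneg fun k _ => hh k)

theorem prod_mul_abs_le_of_mem_admissibleCosts (hh : ∀ k, 0 ≤ h k) {P : ι → ℝ} {w : ℝ}
    (hw : w ∈ admissibleCosts I h e P) {i : ι} (hi : i ∈ I) :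
    (∏ k, h k) * |P i| ≤ (∑ k, 2 / |h k|) * w := by
  obtain ⟨F, hF, hdiv, rfl⟩ := hw
  rw [hdiv i hi, mul_left_comm]
  exact mul_le_mul_of_nonneg_left (abs_fluxDiv_le h e hF i) (Finset.prod_nonneg fun k _ => hh k)

theorem admissibleCosts_nonempty {κ : Type*} [Fintype κ] [DecidableEq κ] {h : κ → ℝ}
    {e : κ → κ → ℤ} {k₀ : κ} (hk₀ : h k₀ ≠ 0) (he : e k₀ = Pi.single k₀ 1)
    (I : Finset (κ → ℤ)) (P : (κ → ℤ) → ℝ) : (admissibleCosts I h e P).Nonempty :=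
  let ⟨F, hF, hdiv⟩ := exists_fluxDiv_eq hk₀ he I P
  ⟨_, F, hF, hdiv, rfl⟩

end AdmissibleCosts

/-- The discrete `W^{-1,1}` norm is well defined: for every `P` the admissible
set of fluxes is nonempty, the resulting infimum is absolutely homogeneous,
satisfies the triangle inequality, and vanishes only at `P = 0`. -/
theorem discrete_Wm11_norm
    (d : ℕ) (hd : 0 < d) (I : Finset (Fin d → ℤ)) (h : Fin d → ℝ)
    (hh : ∀ k, 0 < h k)
    (e : Fin d → (Fin d → ℤ))
    (he : ∀ k j, e k j = if j = k then 1 else 0)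
    (A : ((Fin d → ℤ) → ℝ) → Set ℝ)
    (hA : ∀ P : (Fin d → ℤ) → ℝ,
      A P = { w : ℝ | ∃ F : (Fin d → ℤ) → Fin d → ℝ,
        (Function.support F).Finite ∧
        (∀ i ∈ I, P i = ∑ k : Fin d, (F i k - F (i - e k) k) / h k) ∧
        w = (∏ k : Fin d, h k) * ∑ᶠ i : (Fin d → ℤ), ∑ k : Fin d, |F i k| })
    (N : ((Fin d → ℤ) → ℝ) → ℝ)
    (hN : ∀ P, N P = sInf (A P)) :
    (∀ P : (Fin d → ℤ) → ℝ, (A P).Nonempty) ∧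
    (∀ P : (Fin d → ℤ) → ℝ, 0 ≤ N P) ∧
    (∀ (c : ℝ) (P : (Fin d → ℤ) → ℝ), N (fun i => c * P i) = |c| * N P) ∧
    (∀ P Q : (Fin d → ℤ) → ℝ, N (fun i => P i + Q i) ≤ N P + N Q) ∧
    (∀ P : (Fin d → ℤ) → ℝ, N P = 0 → ∀ i ∈ I, P i = 0) := by
  obtain rfl : A = admissibleCosts I h e := funext hA
  obtain rfl : N = fun P => sInf (admissibleCosts I h e P) := funext hN
  have hh' : ∀ k, 0 ≤ h k := fun k => (hh k).le
  have hne : ∀ P, (admissibleCosts I h e P).Nonempty :=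
    admissibleCosts_nonempty (hh ⟨0, hd⟩).ne' (funext fun j => by simp [he, Pi.single_apply]) I
  have hnonneg : ∀ P, ∀ w ∈ admissibleCosts I h e P, 0 ≤ w :=
    fun _ _ => nonneg_of_mem_admissibleCosts hh'
  refine ⟨hne, fun P => Real.sInf_nonneg (hnonneg P),
    sInf_apply_smul_eq hne hnonneg fun c _ _ => abs_mul_mem_admissibleCosts_smul c,
    sInf_apply_add_le hne hnonneg fun _ _ _ hw₁ _ hw₂ =>
      exists_le_add_of_mem_admissibleCosts hh' hw₁ hw₂,
    fun P (hP : sInf (admissibleCosts I h e P) = 0) i hi => ?_⟩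
  have hbound := le_mul_sInf (hne P) (by positivity)
    fun w hw => prod_mul_abs_le_of_mem_admissibleCosts hh' hw hi
  rw [hP, mul_zero] at hbound
  exact abs_nonpos_iff.1 (nonpos_of_mul_nonpos_right hbound (Finset.prod_pos fun k _ => hh k))
end
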